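/- arXiv:1907.09617 — 2 statements merged into one kernel-verified Lean document; each statement's English description precedes it below -/
import Mathlib

section
/- Let X and ε be independent real random variables such that x ↦ P(X > x) is (strictly positive and) regularly varying at infinity with index −α for some α ∈ (0,∞), and such that E[e^{δε}] < ∞ for some δ > 0. Then P(X + ε > x) / P(X > x) → 1 as x → ∞. (Corollary to Breiman's lemma, proved in the paper.) -/
/-!
Write `T x = P(X > x)`. For `c > 1` and any `y`, independence gives
`P(X + ε > x) ≥ P(X > x + y) P(ε > -y) ≥ T(c x) P(ε > -y)` once `x ≥ y / (c - 1)`, and for `c < 1`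
the union and Chernoff bounds give `P(X + ε > x) ≤ T(c x) + E[e^{δε}] e^{-δ(1-c)x}`. The
exponential term is `o(T)`, because iterating `T(2x) ≥ 2^(-β) T(x)` shows that a regularly
varying tail decays at most polynomially. Dividing by `T x` and using `T(c x)/T(x) → c^(-α)`,
then letting `c → 1` and `y → ∞`, squeezes the ratio to `1`.
-/

open MeasureTheory ProbabilityTheory Filter Real

/-- `f` is regularly varying at infinity with index `ρ`. -/
def RegularlyVarying (f : ℝ → ℝ) (ρ : ℝ) : Prop :=
  ∀ c : ℝ, 0 < c → Tendsto (fun x => f (c * x) / f x) atTop (nhds (c ^ ρ))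

open Set Asymptotics Topology

theorem Antitone.div_rpow_mul_le_of_doubling {T : ℝ → ℝ} (hT : Antitone T) {x₀ β : ℝ}
    (hx₀ : 0 < x₀) (hβ : 0 ≤ β) (hT₀ : 0 ≤ T (2 * x₀))
    (hdouble : ∀ x ≥ x₀, 2 ^ (-β) * T x ≤ T (2 * x)) {x : ℝ} (hx : x₀ ≤ x) :
    (x₀ / x) ^ β * T (2 * x₀) ≤ T x := by
  have near : ∀ x, x₀ ≤ x → x ≤ 2 * x₀ → (x₀ / x) ^ β * T (2 * x₀) ≤ T x := by
    intro x hx hx₂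
    have hle : (x₀ / x) ^ β ≤ 1 :=
      rpow_le_one (div_pos hx₀ (hx₀.trans_le hx)).le ((div_le_one (hx₀.trans_le hx)).2 hx) hβ
    exact (mul_le_of_le_one_left hT₀ hle).trans (hT hx₂)
  have dyadic : ∀ n : ℕ, ∀ x, x₀ ≤ x → x ≤ 2 ^ n * x₀ →
      (x₀ / x) ^ β * T (2 * x₀) ≤ T x := by
    intro n
    induction n with
    | zero => exact fun x hx hx' => near x hx (by linarith)
    | succ n ih =>
      intro x hx hx'
      rcases le_or_gt x (2 * x₀) with hx₂ | hx₂
      · exact near x hx hx₂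
      calc (x₀ / x) ^ β * T (2 * x₀) = 2 ^ (-β) * ((x₀ / (x / 2)) ^ β * T (2 * x₀)) := by
            rw [show x₀ / (x / 2) = 2 * (x₀ / x) by field_simp,
              mul_rpow two_pos.le (div_pos hx₀ (by linarith)).le, rpow_neg two_pos.le, ← mul_assoc,
              ← mul_assoc, inv_mul_cancel₀ (by positivity), one_mul]
        _ ≤ 2 ^ (-β) * T (x / 2) := by
            gcongr
            exact ih _ (by linarith) (by rw [pow_succ] at hx'; linarith)
        _ ≤ T (2 * (x / 2)) := hdouble _ (by linarith)
        _ = T x := by ring_nf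
  obtain ⟨n, hn⟩ := pow_unbounded_of_one_lt (x / x₀) one_lt_two
  exact dyadic n x hx ((div_lt_iff₀ hx₀).1 hn).le

theorem tendsto_rpow_const_nhds_one (ρ : ℝ) : Tendsto (fun c : ℝ => c ^ ρ) (𝓝 1) (𝓝 1) := by
  simpa using (continuousAt_rpow_const 1 ρ (Or.inl one_ne_zero)).tendsto

namespace RegularlyVarying

variable {T N : ℝ → ℝ} {ρ : ℝ}

theorem isLittleO_exp_neg_mul (hRV : RegularlyVarying T ρ) (hT : ∀ x, 0 < T x)
    (hanti : Antitone T) {a : ℝ} (ha : 0 < a) : (fun x => exp (-a * x)) =o[atTop] T := by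
  set β := max (-ρ) 0 + 1
  have hβ : 0 ≤ β := by positivity
  have hlt : (2 : ℝ) ^ (-β) < 2 ^ ρ :=
    rpow_lt_rpow_of_exponent_lt one_lt_two (by linarith [le_max_left (-ρ) 0])
  obtain ⟨x₀, hx₀⟩ := eventually_atTop.1 ((hRV 2 two_pos).eventually (eventually_gt_nhds hlt))
  set x₁ := max x₀ 1
  have hx₁ : 0 < x₁ := zero_lt_one.trans_le (le_max_right _ _)
  have hdouble : ∀ x ≥ x₁, 2 ^ (-β) * T x ≤ T (2 * x) := fun x hx =>
    ((lt_div_iff₀ (hT x)).1 (hx₀ x (le_of_max_le_left hx))).le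
  have hpoly : (fun x => x ^ (-β)) =O[atTop] T := by
    refine IsBigO.of_bound (x₁ ^ β * T (2 * x₁))⁻¹ ?_
    filter_upwards [eventually_ge_atTop x₁] with x hx
    have hx0 : 0 < x := hx₁.trans_le hx
    have key := hanti.div_rpow_mul_le_of_doubling hx₁ hβ (hT _).le hdouble hx
    rw [div_rpow hx₁.le hx0.le] at key
    rw [norm_of_nonneg (by positivity), norm_of_nonneg (hT x).le, rpow_neg hx0.le,
      inv_mul_eq_div, le_div_iff₀ (by have := hT (2 * x₁); positivity)]
    calc (x ^ β)⁻¹ * (x₁ ^ β * T (2 * x₁)) = x₁ ^ β / x ^ β * T (2 * x₁) := by ring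
      _ ≤ T x := key
  exact (isLittleO_exp_neg_mul_rpow_atTop ha (-β)).trans_isBigO hpoly

theorem eventually_lt_div (hRV : RegularlyVarying T ρ) (hT : ∀ x, 0 < T x) (hanti : Antitone T)
    {p : ℝ → ℝ} (hp : Tendsto p atTop (𝓝 1)) (hlower : ∀ x y, T (x + y) * p y ≤ N x)
    {l : ℝ} (hl : l < 1) : ∀ᶠ x in atTop, l < N x / T x := by
  have hprod : Tendsto (fun q : ℝ × ℝ => q.1 ^ ρ * p q.2) (𝓝[>] 1 ×ˢ atTop) (𝓝 1) := by
    simpa using (((tendsto_rpow_const_nhds_one ρ).mono_left nhdsWithin_le_nhds).comp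
      tendsto_fst).mul (hp.comp tendsto_snd)
  obtain ⟨⟨c, y⟩, hlcy, hpy, hc⟩ := ((hprod.eventually (eventually_gt_nhds hl)).and
      ((tendsto_snd.eventually (hp.eventually (eventually_gt_nhds zero_lt_one))).and
        (tendsto_fst.eventually self_mem_nhdsWithin))).exists
  filter_upwards [((hRV c (zero_lt_one.trans hc)).mul_const (p y)).eventually
    (eventually_gt_nhds hlcy), eventually_ge_atTop (y / (c - 1))] with x hratio hx
  have hxy : x + y ≤ c * x := by
    rw [div_le_iff₀ (by linarith)] at hx
    linarith
  calc l < T (c * x) / T x * p y := hratio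
    _ ≤ T (x + y) * p y / T x := by
        rw [div_mul_eq_mul_div]
        gcongr
        · exact (hT x).le
        · exact hanti hxy
    _ ≤ N x / T x := by
        gcongr
        · exact (hT x).le
        · exact hlower x y

theorem eventually_div_lt (hRV : RegularlyVarying T ρ) (hT : ∀ x, 0 < T x)
    (hupper : ∀ c ∈ Ioo (0 : ℝ) 1, ∃ G : ℝ → ℝ, G =o[atTop] T ∧ ∀ x, N x ≤ T (c * x) + G x)
    {u : ℝ} (hu : 1 < u) : ∀ᶠ x in atTop, N x / T x < u := by
  obtain ⟨c, hcu, hc⟩ := ((((tendsto_rpow_const_nhds_one ρ).mono_left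
    nhdsWithin_le_nhds).eventually (eventually_lt_nhds hu)).and
    (Ioo_mem_nhdsLT zero_lt_one)).exists
  obtain ⟨G, hGo, hNG⟩ := hupper c hc
  have hlim : Tendsto (fun x => T (c * x) / T x + G x / T x) atTop (𝓝 (c ^ ρ + 0)) :=
    (hRV c hc.1).add hGo.tendsto_div_nhds_zero
  filter_upwards [hlim.eventually (eventually_lt_nhds (by simpa using hcu))] with x hx
  calc N x / T x ≤ (T (c * x) + G x) / T x :=
        div_le_div_of_nonneg_right (hNG x) (hT x).le
    _ = T (c * x) / T x + G x / T x := add_div _ _ _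
    _ < u := hx

theorem tendsto_div_of_sandwich (hRV : RegularlyVarying T ρ) (hT : ∀ x, 0 < T x)
    (hanti : Antitone T) {p : ℝ → ℝ} (hp : Tendsto p atTop (𝓝 1))
    (hlower : ∀ x y, T (x + y) * p y ≤ N x)
    (hupper : ∀ c ∈ Ioo (0 : ℝ) 1, ∃ G : ℝ → ℝ, G =o[atTop] T ∧ ∀ x, N x ≤ T (c * x) + G x) :
    Tendsto (fun x => N x / T x) atTop (𝓝 1) :=
  tendsto_order.2 ⟨fun _ hl => hRV.eventually_lt_div hT hanti hp hlower hl,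
    fun _ hu => hRV.eventually_div_lt hT hupper hu⟩

end RegularlyVarying

section Tails

variable {Ω : Type*} [MeasurableSpace Ω] {μ : Measure Ω} {X Y : Ω → ℝ}

theorem antitone_measureReal_gt [IsFiniteMeasure μ] : Antitone fun x => μ.real {ω | X ω > x} :=
  fun _ _ hab => measureReal_mono fun _ h => hab.trans_lt h

theorem tendsto_measureReal_gt_neg_atTop [IsProbabilityMeasure μ] :
    Tendsto (fun y => μ.real {ω | Y ω > -y}) atTop (𝓝 1) := by
  have hmono : Monotone fun y : ℝ => {ω | Y ω > -y} :=
    fun _ _ hab _ h => (neg_le_neg hab).trans_lt h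
  have hunion : (⋃ y : ℝ, {ω | Y ω > -y}) = univ :=
    eq_univ_of_forall fun ω => mem_iUnion.2 ⟨-Y ω + 1, by simp⟩
  have h := tendsto_measure_iUnion_atTop (μ := μ) hmono
  rw [hunion, measure_univ] at h
  exact (ENNReal.tendsto_toReal ENNReal.one_ne_top).comp h

theorem ProbabilityTheory.IndepFun.measureReal_gt_mul_le [IsFiniteMeasure μ] (h : IndepFun X Y μ)
    (x y : ℝ) :
    μ.real {ω | X ω > x + y} * μ.real {ω | Y ω > -y} ≤ μ.real {ω | X ω + Y ω > x} := by
  have hmul := h.measure_inter_preimage_eq_mul (Ioi (x + y)) (Ioi (-y))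
    measurableSet_Ioi measurableSet_Ioi
  rw [Measure.real, Measure.real, ← ENNReal.toReal_mul]
  refine (congrArg ENNReal.toReal hmul).symm.le.trans (measureReal_mono ?_)
  rintro ω ⟨hX, hY⟩
  simp only [mem_preimage, mem_Ioi] at hX hY
  show x < X ω + Y ω
  linarith

theorem measureReal_add_gt_le [IsFiniteMeasure μ] {t : ℝ} (ht : 0 ≤ t)
    (hY : Integrable (fun ω => exp (t * Y ω)) μ) (c x : ℝ) :
    μ.real {ω | X ω + Y ω > x} ≤
      μ.real {ω | X ω > c * x} + mgf Y μ t * exp (-(t * (1 - c)) * x) := by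
  have hsplit : {ω | X ω + Y ω > x} ⊆ {ω | X ω > c * x} ∪ {ω | (1 - c) * x ≤ Y ω} := by
    intro ω (hω : x < X ω + Y ω)
    by_contra! h
    simp only [mem_union, mem_ofPred_eq, not_or, not_lt, not_le] at h
    linarith
  calc μ.real {ω | X ω + Y ω > x}
      ≤ μ.real {ω | X ω > c * x} + μ.real {ω | (1 - c) * x ≤ Y ω} :=
        (measureReal_mono hsplit).trans (measureReal_union_le _ _)
    _ ≤ μ.real {ω | X ω > c * x} + mgf Y μ t * exp (-(t * (1 - c)) * x) := by
        gcongr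
        refine (measure_ge_le_exp_mul_mgf _ ht hY).trans_eq ?_
        ring_nf

end Tails

theorem stmt1_general
    {Ω : Type*} [MeasurableSpace Ω] (μ : Measure Ω) [IsProbabilityMeasure μ]
    (X ε : Ω → ℝ)
    (hindep : IndepFun X ε μ)
    (α : ℝ)
    (hpos : ∀ x : ℝ, 0 < (μ {ω | X ω > x}).toReal)
    (hRV : RegularlyVarying (fun x => (μ {ω | X ω > x}).toReal) (-α))
    (hmgf : ∃ δ : ℝ, 0 < δ ∧ Integrable (fun ω => Real.exp (δ * ε ω)) μ) :
    Tendsto (fun x =>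
        (μ {ω | X ω + ε ω > x}).toReal / (μ {ω | X ω > x}).toReal) atTop (nhds 1) := by
  obtain ⟨δ, hδ, hint⟩ := hmgf
  refine hRV.tendsto_div_of_sandwich hpos antitone_measureReal_gt
    tendsto_measureReal_gt_neg_atTop hindep.measureReal_gt_mul_le fun c hc =>
      ⟨fun x => mgf ε μ δ * exp (-(δ * (1 - c)) * x), ?_, measureReal_add_gt_le hδ.le hint c⟩
  exact (hRV.isLittleO_exp_neg_mul hpos antitone_measureReal_gt
    (mul_pos hδ (sub_pos.2 hc.2))).const_mul_left _

/-- Corollary to Breiman's lemma: adding independent noise with a finite exponential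
moment does not change a regularly varying tail. -/
theorem stmt1
    {Ω : Type*} [MeasurableSpace Ω] (μ : Measure Ω) [IsProbabilityMeasure μ]
    (X ε : Ω → ℝ) (hX : Measurable X) (hε : Measurable ε)
    (hindep : IndepFun X ε μ)
    (α : ℝ) (hα : 0 < α)
    (hpos : ∀ x : ℝ, 0 < (μ {ω | X ω > x}).toReal)
    (hRV : RegularlyVarying (fun x => (μ {ω | X ω > x}).toReal) (-α))
    (hmgf : ∃ δ : ℝ, 0 < δ ∧ Integrable (fun ω => Real.exp (δ * ε ω)) μ) :
    Tendsto (fun x =>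
        (μ {ω | X ω + ε ω > x}).toReal / (μ {ω | X ω > x}).toReal) atTop (nhds 1) :=
  stmt1_general μ X ε hindep α hpos hRV hmgf
end

section
/- Let θ₁, θ₂ > 0 and α₁ > 2. For every x > 0 there exists a unique q₁ = q₁(x) ∈ (0,x) satisfying θ₁α₁ q₁^{α₁−1} = 2θ₂(x − q₁); set q₂(x) = x − q₁(x). Then as x → ∞: q₁(x) / (2θ₂x/(θ₁α₁))^{1/(α₁−1)} → 1, q₂(x)/x → 1, and (θ₁ q₁(x)^{α₁} + θ₂ q₂(x)²) / (θ₂ x²) → 1. (Asymptotic solution of the exponent-balancing system in Proposition 1, part 3c.) -/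
open Filter Real

/-!
Writing `c = θ₁α₁/(2θ₂)`, the balance equation reads `x = q₁ + c q₁^{α₁-1}`. The left side is
strictly increasing in `q₁`, which gives uniqueness. Since `q₁^{α₁-1} ≤ x / c` and `α₁ - 1 > 1`,
`q₁ = O(x^{1/(α₁-1)}) = o(x)`, so `q₂ / x → 1`; then `q₁^{α₁-1} = q₂ / c ~ x / c`. Finally
`θ₁ q₁^{α₁} = q₁ · θ₁ q₁^{α₁-1} = 2θ₂ q₁ q₂ / α₁ = o(x²)`, so `θ₂ q₂²` dominates the sum.
-/

theorem strictMonoOn_mul_rpow_add_mul {a b p : ℝ} (ha : 0 ≤ a) (hb : 0 < b) (hp : 0 ≤ p) :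
    StrictMonoOn (fun t : ℝ => a * t ^ p + b * t) (Set.Ici 0) := by
  intro s hs t _ hst
  have : a * s ^ p ≤ a * t ^ p := mul_le_mul_of_nonneg_left (rpow_le_rpow hs hst.le hp) ha
  show a * s ^ p + b * s < a * t ^ p + b * t
  linarith [mul_lt_mul_of_pos_left hst hb]

theorem tendsto_div_atTop_zero_of_rpow_le {f : ℝ → ℝ} {p C : ℝ} (hp : 1 < p) (hC : 0 ≤ C)
    (hf : ∀ᶠ x in atTop, 0 ≤ f x ∧ f x ^ p ≤ C * x) :
    Tendsto (fun x => f x / x) atTop (nhds 0) := by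
  have hp₀ : p ≠ 0 := by positivity
  have hbound : Tendsto (fun x => C ^ p⁻¹ * x ^ (-(1 - p⁻¹))) atTop (nhds (C ^ p⁻¹ * 0)) :=
    (tendsto_rpow_neg_atTop (sub_pos.2 (inv_lt_one_of_one_lt₀ hp))).const_mul _
  rw [mul_zero] at hbound
  refine tendsto_of_tendsto_of_tendsto_of_le_of_le' tendsto_const_nhds hbound ?_ ?_
  · filter_upwards [hf, eventually_gt_atTop 0] with x hfx hx
    exact div_nonneg hfx.1 hx.le
  · filter_upwards [hf, eventually_gt_atTop 0] with x ⟨hf₀, hfp⟩ hx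
    have hfx : f x ≤ (C * x) ^ p⁻¹ := by
      calc f x = (f x ^ p) ^ p⁻¹ := (rpow_rpow_inv hf₀ hp₀).symm
        _ ≤ (C * x) ^ p⁻¹ := rpow_le_rpow (by positivity) hfp (by positivity)
    calc f x / x ≤ (C * x) ^ p⁻¹ / x := by gcongr
      _ = C ^ p⁻¹ * x ^ (-(1 - p⁻¹)) := by
        rw [neg_sub, rpow_sub_one hx.ne', mul_rpow hC hx.le, mul_div_assoc]

section Balance

variable {a b p : ℝ} {q : ℝ → ℝ}

theorem eq_of_mul_rpow_eq_mul_sub (ha : 0 ≤ a) (hb : 0 < b) (hp : 0 ≤ p) {x s t : ℝ}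
    (hs : 0 ≤ s) (ht : 0 ≤ t) (hs' : a * s ^ p = b * (x - s)) (ht' : a * t ^ p = b * (x - t)) :
    s = t :=
  (strictMonoOn_mul_rpow_add_mul ha hb hp).injOn hs ht
    (show a * s ^ p + b * s = a * t ^ p + b * t by linarith)

theorem div_rpow_inv_eq_of_mul_rpow_eq_mul_sub (ha : 0 < a) (hb : 0 < b) (hp : p ≠ 0)
    {x t : ℝ} (hx : 0 < x) (ht : 0 ≤ t) (h : a * t ^ p = b * (x - t)) :
    t / (b * x / a) ^ (1 / p) = ((x - t) / x) ^ (1 / p) := by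
  have hxt : 0 ≤ x - t := by
    have : 0 ≤ b * (x - t) := h ▸ by positivity
    exact nonneg_of_mul_nonneg_right this hb
  have ht_eq : t = (b * (x - t) / a) ^ (1 / p) := by
    rw [← h, mul_div_cancel_left₀ _ ha.ne', one_div, rpow_rpow_inv ht hp]
  calc t / (b * x / a) ^ (1 / p) = (b * (x - t) / a) ^ (1 / p) / (b * x / a) ^ (1 / p) := by
        rw [← ht_eq]
    _ = ((x - t) / x) ^ (1 / p) := by
        rw [← div_rpow (by positivity) (by positivity)]
        congr 1
        field_simp

variable (ha : 0 < a) (hb : 0 < b) (hp : 1 < p)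
  (hq : ∀ᶠ x in atTop, 0 < q x ∧ a * q x ^ p = b * (x - q x))
include ha hb hp hq

theorem tendsto_balance_div_self : Tendsto (fun x => q x / x) atTop (nhds 0) := by
  refine tendsto_div_atTop_zero_of_rpow_le hp (C := b / a) (by positivity) ?_
  filter_upwards [hq, eventually_gt_atTop 0] with x ⟨hq₀, hqx⟩ hx
  refine ⟨hq₀.le, ?_⟩
  rw [div_mul_eq_mul_div, le_div_iff₀ ha, mul_comm, hqx]
  nlinarith

theorem tendsto_sub_balance_div_self : Tendsto (fun x => (x - q x) / x) atTop (nhds 1) := by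
  have h := (tendsto_balance_div_self ha hb hp hq).const_sub 1
  rw [sub_zero] at h
  refine h.congr' ?_
  filter_upwards [eventually_gt_atTop 0] with x hx
  field_simp

theorem tendsto_balance_div_rpow :
    Tendsto (fun x => q x / (b * x / a) ^ (1 / p)) atTop (nhds 1) := by
  have h := (tendsto_sub_balance_div_self ha hb hp hq).rpow_const (p := 1 / p) (.inl one_ne_zero)
  rw [one_rpow] at h
  refine h.congr' ?_
  filter_upwards [hq, eventually_gt_atTop 0] with x ⟨hq₀, hqx⟩ hx
  exact (div_rpow_inv_eq_of_mul_rpow_eq_mul_sub ha hb (by positivity) hx hq₀.le hqx).symm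

end Balance

theorem tendsto_balanced_cost_div_sq {θ₁ θ₂ α : ℝ} {q : ℝ → ℝ} (hθ₁ : 0 < θ₁) (hθ₂ : 0 < θ₂)
    (hα : 2 < α) (hq : ∀ᶠ x in atTop, 0 < q x ∧ θ₁ * α * q x ^ (α - 1) = 2 * θ₂ * (x - q x)) :
    Tendsto (fun x => (θ₁ * q x ^ α + θ₂ * (x - q x) ^ 2) / (θ₂ * x ^ 2)) atTop (nhds 1) := by
  have ha : 0 < θ₁ * α := by positivity
  have hp : 1 < α - 1 := by linarith
  have hlim := (tendsto_sub_balance_div_self ha (by positivity) hp hq).mul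
    ((tendsto_balance_div_self ha (by positivity) hp hq).const_mul (2 / α) |>.add
      (tendsto_sub_balance_div_self ha (by positivity) hp hq))
  rw [mul_zero, zero_add, mul_one] at hlim
  refine hlim.congr' ?_
  filter_upwards [hq, eventually_gt_atTop 0] with x ⟨hq₀, hqx⟩ hx
  have hpow : θ₁ * q x ^ α = 2 * θ₂ * (x - q x) * q x / α := by
    rw [← hqx, show α = (α - 1) + 1 by ring, rpow_add_one hq₀.ne', add_sub_cancel_right]
    field_simp
  rw [hpow]
  field_simp

/-- Asymptotic solution of the exponent-balancing system in Proposition 1, part 3c: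
for `θ₁, θ₂ > 0` and `α₁ > 2`, the system `q₁ + q₂ = x`,
`θ₁ α₁ q₁^{α₁-1} = 2 θ₂ q₂` has a unique solution with `q₁ ∈ (0,x)`, and as `x → ∞`,
`q₁(x)/(2θ₂x/(θ₁α₁))^{1/(α₁-1)} → 1`, `q₂(x)/x → 1`, and
`(θ₁ q₁(x)^{α₁} + θ₂ q₂(x)²)/(θ₂ x²) → 1`. -/
theorem stmt16
    (θ₁ θ₂ α₁ : ℝ) (hθ₁ : 0 < θ₁) (hθ₂ : 0 < θ₂) (hα₁ : 2 < α₁)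
    (q₁ : ℝ → ℝ)
    (hq : ∀ x : ℝ, 0 < x → q₁ x ∈ Set.Ioo 0 x ∧
        θ₁ * α₁ * q₁ x ^ (α₁ - 1) = 2 * θ₂ * (x - q₁ x)) :
    (∀ x : ℝ, 0 < x → ∃! q : ℝ, q ∈ Set.Ioo 0 x ∧
        θ₁ * α₁ * q ^ (α₁ - 1) = 2 * θ₂ * (x - q)) ∧
      Tendsto (fun x =>
          q₁ x / (2 * θ₂ * x / (θ₁ * α₁)) ^ (1 / (α₁ - 1))) atTop (nhds 1) ∧
      Tendsto (fun x => (x - q₁ x) / x) atTop (nhds 1) ∧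
      Tendsto (fun x =>
          (θ₁ * q₁ x ^ α₁ + θ₂ * (x - q₁ x) ^ 2) / (θ₂ * x ^ 2)) atTop (nhds 1) := by
  have hev : ∀ᶠ x in atTop, 0 < q₁ x ∧ θ₁ * α₁ * q₁ x ^ (α₁ - 1) = 2 * θ₂ * (x - q₁ x) := by
    filter_upwards [eventually_gt_atTop 0] with x hx
    exact ⟨(hq x hx).1.1, (hq x hx).2⟩
  have ha : 0 < θ₁ * α₁ := by positivity
  have hb : 0 < 2 * θ₂ := by positivity
  have hp : 1 < α₁ - 1 := by linarith
  refine ⟨fun x hx => ⟨q₁ x, hq x hx, fun q ⟨hqx, hq'⟩ => ?_⟩,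
    tendsto_balance_div_rpow ha hb hp hev, tendsto_sub_balance_div_self ha hb hp hev,
    tendsto_balanced_cost_div_sq hθ₁ hθ₂ hα₁ hev⟩
  exact eq_of_mul_rpow_eq_mul_sub ha.le hb (by linarith) hqx.1.le (hq x hx).1.1.le hq' (hq x hx).2
end
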